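/- Let G be a graph on n vertices with maximum matching size opt(G) ≥ C·α for a sufficiently large constant C, and let α ≥ log n. Sample each vertex independently-enough (four-wise independently) with probability p = (log n)/α, and let G_smp be the induced subgraph on sampled vertices. Then with probability 1 − o(1), the maximum matching size of G_smp is at most (3 log n / α)·opt(G). -/

import Mathlib

open Finset
open scoped Classical

/-- `M` is a matching in the graph `G`: a set of edges of `G` that are pairwise
vertex-disjoint. -/
def IsMatchingIn {V : Type*} (G : SimpleGraph V) (M : Finset (Sym2 V)) : Prop :=
  (∀ e ∈ M, e ∈ G.edgeSet) ∧
  ∀ e ∈ M, ∀ f ∈ M, e ≠ f → ∀ v : V, v ∈ e → v ∉ f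

/-- The maximum matching size of a graph on a finite vertex set. -/
noncomputable def matchNum {V : Type*} [Fintype V] (G : SimpleGraph V) : ℕ :=
  sSup {k | ∃ M : Finset (Sym2 V), IsMatchingIn G M ∧ M.card = k}

/-- The maximum size of a matching of `G` all of whose edges have both endpoints in
the vertex set `A` (i.e. the matching number of the induced subgraph on `A`). -/
noncomputable def matchNumOn {V : Type*} [Fintype V] (G : SimpleGraph V) (A : Set V) : ℕ :=
  sSup {k | ∃ M : Finset (Sym2 V), IsMatchingIn G M ∧
    (∀ e ∈ M, ∀ v : V, v ∈ e → v ∈ A) ∧ M.card = k}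

/-! Fix a maximum matching `M*` of `G` and let `U` be the set of its `2·opt(G)` endpoints. By
maximality every edge of `G` meets `U`, and a matching uses each vertex at most once, so the
matching number of the sample is at most the number `X` of sampled vertices of `U`. As a sum of
pairwise independent Bernoulli(`p`) indicators, `X` has mean `p·|U| ≤ 2p·opt(G)` and variance at
most `p·|U|`; Chebyshev's inequality bounds the probability that `X` exceeds `3p·opt(G)` by
`2 / (p·opt(G)) ≤ 2 / log n`, since `p·opt(G) ≥ p·α = log n`. -/

section Matching

variable {V : Type*} {G : SimpleGraph V}

lemma IsMatchingIn.insert {M : Finset (Sym2 V)} {e : Sym2 V} (hM : IsMatchingIn G M)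
    (he : e ∈ G.edgeSet) (hfree : ∀ v ∈ e, ∀ f ∈ M, v ∉ f) : IsMatchingIn G (insert e M) := by
  refine ⟨fun f hf => ?_, fun f₁ hf₁ f₂ hf₂ hne v hv₁ hv₂ => ?_⟩
  · rcases Finset.mem_insert.1 hf with rfl | hf
    exacts [he, hM.1 f hf]
  rcases Finset.mem_insert.1 hf₁ with h₁ | hf₁ <;> rcases Finset.mem_insert.1 hf₂ with h₂ | hf₂
  · exact hne (h₁.trans h₂.symm)
  · exact hfree v (h₁ ▸ hv₁) f₂ hf₂ hv₂
  · exact hfree v (h₂ ▸ hv₂) f₁ hf₁ hv₁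
  · exact hM.2 f₁ hf₁ f₂ hf₂ hne v hv₁ hv₂

lemma IsMatchingIn.card_le_of_forall_exists_mem {M : Finset (Sym2 V)} {W : Finset V}
    (hM : IsMatchingIn G M) (hW : ∀ e ∈ M, ∃ v ∈ W, v ∈ e) : #M ≤ #W :=
  Finset.card_le_card_of_forall_subsingleton (fun e v => v ∈ e) hW
    fun v _ e₁ ⟨he₁, hv₁⟩ e₂ ⟨he₂, hv₂⟩ => by_contra fun hne => hM.2 e₁ he₁ e₂ he₂ hne v hv₁ hv₂

lemma card_biUnion_toFinset_le [DecidableEq V] (M : Finset (Sym2 V)) :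
    #(M.biUnion Sym2.toFinset) ≤ 2 * #M := by
  rw [mul_comm]
  refine Finset.card_biUnion_le_card_mul _ _ _ fun e _ => ?_
  rw [Sym2.card_toFinset]
  split_ifs <;> omega

variable [Fintype V]

lemma bddAbove_card_isMatchingIn (G : SimpleGraph V) :
    BddAbove {k | ∃ M, IsMatchingIn G M ∧ #M = k} := by
  refine ⟨Fintype.card (Sym2 V), ?_⟩
  rintro k ⟨M, -, rfl⟩
  exact M.card_le_univ

lemma IsMatchingIn.card_le_matchNum {M : Finset (Sym2 V)} (hM : IsMatchingIn G M) :
    #M ≤ matchNum G :=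
  le_csSup (bddAbove_card_isMatchingIn G) ⟨M, hM, rfl⟩

lemma exists_isMatchingIn_card_eq_matchNum (G : SimpleGraph V) :
    ∃ M, IsMatchingIn G M ∧ #M = matchNum G :=
  Nat.sSup_mem (s := {k | ∃ M, IsMatchingIn G M ∧ #M = k}) ⟨0, ∅, by simp [IsMatchingIn]⟩
    (bddAbove_card_isMatchingIn G)

lemma IsMatchingIn.exists_mem_of_card_eq_matchNum {M : Finset (Sym2 V)} (hM : IsMatchingIn G M)
    (hmax : #M = matchNum G) {e : Sym2 V} (he : e ∈ G.edgeSet) : ∃ v ∈ e, ∃ f ∈ M, v ∈ f := by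
  by_contra! hfree
  obtain ⟨v, hv⟩ : ∃ v, v ∈ e := ⟨e.out.1, Sym2.out_fst_mem e⟩
  have heM : e ∉ M := fun h => hfree v hv e h hv
  have := (hM.insert he hfree).card_le_matchNum
  rw [Finset.card_insert_of_notMem heM] at this
  omega

lemma matchNumOn_le_card_filter [DecidableEq V] {M : Finset (Sym2 V)} (hM : IsMatchingIn G M)
    (hmax : #M = matchNum G) (A : Set V) :
    matchNumOn G A ≤ #((M.biUnion Sym2.toFinset).filter (· ∈ A)) := by
  refine csSup_le' ?_
  rintro k ⟨N, hN, hNA, rfl⟩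
  refine hN.card_le_of_forall_exists_mem fun e he => ?_
  obtain ⟨v, hve, f, hf, hvf⟩ := hM.exists_mem_of_card_eq_matchNum hmax (hN.1 e he)
  exact ⟨v, Finset.mem_filter.2 ⟨Finset.mem_biUnion.2 ⟨f, hf, Sym2.mem_toFinset.2 hvf⟩,
    hNA e he v hve⟩, hve⟩

end Matching

section PairwiseBernoulli

variable {S ι : Type*} [Fintype S]

/-- For `0/1`-valued variables, the weights of the events "all coordinates in `T` are `1`", for
`#T ≤ 2`, determine the pairwise joint law: this says the `Z · v` are pairwise independent
`p`-biased coins under the weights `q`. -/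
def PairwiseBernoulli (q : S → ℝ) (Z : S → ι → Bool) (p : ℝ) : Prop :=
  ∀ T : Finset ι, #T ≤ 2 → ∑ s, (if ∀ v ∈ T, Z s v then q s else 0) = p ^ #T

lemma sum_ite_le_sum_mul_sq_div (q X : S → ℝ) (hq : ∀ s, 0 ≤ q s) (μ : ℝ) {t : ℝ} (ht : 0 < t) :
    ∑ s, (if t ≤ |X s - μ| then q s else 0) ≤ (∑ s, q s * (X s - μ) ^ 2) / t ^ 2 := by
  rw [Finset.sum_div]
  refine Finset.sum_le_sum fun s _ => ?_
  split_ifs with h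
  · rw [le_div_iff₀ (by positivity), ← sq_abs (X s - μ)]
    exact mul_le_mul_of_nonneg_left (pow_le_pow_left₀ ht.le h 2) (hq s)
  · exact div_nonneg (mul_nonneg (hq s) (sq_nonneg _)) (sq_nonneg _)

lemma sum_ite_le_sum_ite_of_imp {q : S → ℝ} (hq : ∀ s, 0 ≤ q s) {P Q : S → Prop}
    [DecidablePred P] [DecidablePred Q] (hPQ : ∀ s, P s → Q s) :
    ∑ s, (if P s then q s else 0) ≤ ∑ s, (if Q s then q s else 0) :=
  Finset.sum_le_sum fun s _ => by
    by_cases hP : P s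
    · simp [hP, hPQ s hP]
    · rw [if_neg hP]
      split_ifs
      exacts [hq s, le_rfl]

namespace PairwiseBernoulli

variable {q : S → ℝ} {Z : S → ι → Bool} {p : ℝ}

lemma sum_eq_one (h : PairwiseBernoulli q Z p) : ∑ s, q s = 1 := by
  simpa using h ∅ (by simp)

lemma sum_ite_and (h : PairwiseBernoulli q Z p) (u v : ι) :
    ∑ s, (if Z s u ∧ Z s v then q s else 0) = if u = v then p else p ^ 2 := by
  split_ifs with huv
  · subst huv
    simpa using h {u} (by simp)
  · simpa [Finset.card_pair huv] using h {u, v} Finset.card_le_two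

lemma sum_ite (h : PairwiseBernoulli q Z p) (v : ι) :
    ∑ s, (if Z s v then q s else 0) = p := by
  simpa using h.sum_ite_and v v

lemma sum_mul_card_filter (h : PairwiseBernoulli q Z p) (U : Finset ι) :
    ∑ s, q s * #(U.filter (Z s ·)) = #U * p := by
  simp only [Finset.card_filter, Nat.cast_sum, Nat.cast_ite, Nat.cast_one, Nat.cast_zero,
    Finset.mul_sum, mul_ite, mul_one, mul_zero]
  rw [Finset.sum_comm]
  simp [h.sum_ite]

lemma sum_mul_card_filter_sq (h : PairwiseBernoulli q Z p) (U : Finset ι) :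
    ∑ s, q s * (#(U.filter (Z s ·)) : ℝ) ^ 2 = (#U * p) ^ 2 + #U * p * (1 - p) := by
  have hexpand : ∀ s, q s * (#(U.filter (Z s ·)) : ℝ) ^ 2 =
      ∑ u ∈ U, ∑ v ∈ U, if Z s u ∧ Z s v then q s else 0 := by
    intro s
    rw [Finset.card_filter, Nat.cast_sum, sq, Finset.sum_mul_sum, Finset.mul_sum]
    refine Finset.sum_congr rfl fun u _ => ?_
    rw [Finset.mul_sum]
    refine Finset.sum_congr rfl fun v _ => ?_
    split_ifs <;> simp_all
  have hrow : ∀ u ∈ U, ∑ v ∈ U, (if u = v then p else p ^ 2) = #U * p ^ 2 + (p - p ^ 2) := by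
    intro u hu
    calc ∑ v ∈ U, (if u = v then p else p ^ 2)
        = ∑ v ∈ U, (p ^ 2 + if u = v then p - p ^ 2 else 0) :=
          Finset.sum_congr rfl fun v _ => by split_ifs <;> ring
      _ = #U * p ^ 2 + (p - p ^ 2) := by
          rw [Finset.sum_add_distrib, Finset.sum_const, Finset.sum_ite_eq, if_pos hu, nsmul_eq_mul]
  simp_rw [hexpand]
  rw [Finset.sum_comm]
  simp_rw [Finset.sum_comm (s := Finset.univ), h.sum_ite_and]
  rw [Finset.sum_congr rfl hrow, Finset.sum_const, nsmul_eq_mul]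
  ring

lemma sum_mul_sub_sq (h : PairwiseBernoulli q Z p) (U : Finset ι) :
    ∑ s, q s * (#(U.filter (Z s ·)) - #U * p) ^ 2 = #U * p * (1 - p) := by
  set μ : ℝ := #U * p
  have hexpand : ∀ s, q s * (#(U.filter (Z s ·)) - μ) ^ 2 =
      q s * (#(U.filter (Z s ·)) : ℝ) ^ 2 - 2 * μ * (q s * #(U.filter (Z s ·))) + μ ^ 2 * q s :=
    fun s => by ring
  simp_rw [hexpand]
  rw [Finset.sum_add_distrib, Finset.sum_sub_distrib, ← Finset.mul_sum, ← Finset.mul_sum,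
    h.sum_mul_card_filter_sq, h.sum_mul_card_filter, h.sum_eq_one]
  ring

lemma sum_ite_le_abs_sub_le (h : PairwiseBernoulli q Z p) (hq : ∀ s, 0 ≤ q s) (hp : 0 ≤ p)
    (U : Finset ι) {t : ℝ} (ht : 0 < t) :
    ∑ s, (if t ≤ |#(U.filter (Z s ·)) - #U * p| then q s else 0) ≤ #U * p / t ^ 2 := by
  refine (sum_ite_le_sum_mul_sq_div q _ hq _ ht).trans ?_
  rw [h.sum_mul_sub_sq]
  refine div_le_div_of_nonneg_right ?_ (sq_nonneg t)
  nlinarith [mul_nonneg (mul_nonneg (Nat.cast_nonneg (α := ℝ) #U) hp) hp]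

end PairwiseBernoulli

end PairwiseBernoulli

theorem sum_ite_three_mul_lt_matchNumOn_le {S V : Type*} [Fintype S] [Fintype V] [DecidableEq V]
    {G : SimpleGraph V} {q : S → ℝ} {Z : S → V → Bool} {p : ℝ} (h : PairwiseBernoulli q Z p)
    (hq : ∀ s, 0 ≤ q s) (hpG : 0 < p * matchNum G) :
    ∑ s, (if 3 * p * matchNum G < matchNumOn G {v | Z s v} then q s else 0)
      ≤ 2 / (p * matchNum G) := by
  have hp : 0 < p := pos_of_mul_pos_left hpG (Nat.cast_nonneg _)
  obtain ⟨M, hM, hMcard⟩ := exists_isMatchingIn_card_eq_matchNum G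
  have hU : (#(M.biUnion Sym2.toFinset) : ℝ) ≤ 2 * matchNum G := by
    rw [← hMcard]
    exact_mod_cast card_biUnion_toFinset_le M
  set U := M.biUnion Sym2.toFinset
  have hpU := mul_le_mul_of_nonneg_left hU hp.le
  calc ∑ s, (if 3 * p * matchNum G < matchNumOn G {v | Z s v} then q s else 0)
      ≤ ∑ s, (if p * matchNum G ≤ |#(U.filter (Z s ·)) - #U * p| then q s else 0) :=
        sum_ite_le_sum_ite_of_imp hq fun s hs => by
          have hX : (matchNumOn G {v | Z s v} : ℝ) ≤ #(U.filter (Z s ·)) := by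
            exact_mod_cast (by simpa using matchNumOn_le_card_filter hM hMcard {v | Z s v})
          exact le_trans (by linarith) (le_abs_self _)
    _ ≤ #U * p / (p * matchNum G) ^ 2 := h.sum_ite_le_abs_sub_le hq hp.le U hpG
    _ ≤ 2 / (p * matchNum G) := by
        rw [div_le_div_iff₀ (by positivity) hpG]
        nlinarith

/-- Lemma 8.1, Part 1: there are constants `C₀, C₁ > 0` such that for any graph `G` on
`n ≥ 2` vertices with `opt(G) ≥ C₀·α` and `α ≥ log n`, sampling each vertex four-wise
independently with probability `pr = (log n)/α` yields an induced subgraph whose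
maximum matching size exceeds `(3 log n / α)·opt(G)` with probability at most
`C₁ / log n` (i.e. the bound holds with probability `1 - o(1)`). -/
theorem stmt11 : ∃ C₀ C₁ : ℝ, 0 < C₀ ∧ 0 < C₁ ∧
    ∀ (n : ℕ) (α : ℝ) (G : SimpleGraph (Fin n))
      (S : Type) (_ : Fintype S) (qd : S → ℝ) (Z : S → Fin n → Bool) (pr : ℝ),
      2 ≤ n → Real.log n ≤ α →
      (∀ s, 0 ≤ qd s) → (∑ s, qd s = 1) →
      pr = Real.log n / α →
      (∀ T : Finset (Fin n), T.card ≤ 4 → ∀ f : Fin n → Bool,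
        (∑ s, if ∀ v ∈ T, Z s v = f v then qd s else 0)
          = ∏ v ∈ T, (if f v then pr else 1 - pr)) →
      C₀ * α ≤ (matchNum G : ℝ) →
      (∑ s, if ¬ ((matchNumOn G {v | Z s v = true} : ℝ)
            ≤ 3 * Real.log n / α * (matchNum G : ℝ)) then qd s else 0)
        ≤ C₁ / Real.log n := by
  refine ⟨1, 2, one_pos, two_pos, ?_⟩
  intro n α G S _ qd Z pr hn hα hq _ hpr hmom hopt
  have hlog : 0 < Real.log n := Real.log_pos (by exact_mod_cast hn)
  have hα0 : 0 < α := hlog.trans_le hα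
  have hlog_le : Real.log n ≤ pr * matchNum G := by
    rw [hpr, div_mul_eq_mul_div, le_div_iff₀ hα0]
    exact mul_le_mul_of_nonneg_left (by linarith) hlog.le
  have hbern : PairwiseBernoulli qd Z pr := fun T hT => by
    convert hmom T (by omega) fun _ => true
    simp
  simp_rw [not_le, mul_div_assoc, ← hpr]
  calc _ ≤ 2 / (pr * matchNum G) :=
        sum_ite_three_mul_lt_matchNumOn_le hbern hq (hlog.trans_le hlog_le)
    _ ≤ 2 / Real.log n := by gcongr
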